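/- Splitting Lemma for S-polyregular functions: let n ∈ ℕ and let f : ℍ → ℍ be S-polyregular of level n in decomposed form, f(q) = ∑_{k=0}^{n} q̄^k·φ_k(q), where φ_k(q) = ∑_j q^j·a_{j,k} with ∑_j |a_{j,k}|·r^j < ∞ for all r > 0. Let I, J ∈ 𝕊 with I·J = −J·I. Then there exist coefficients b_{j,k}, c_{j,k} ∈ ℂ_I := ℝ + ℝI (0 ≤ k ≤ n, j ∈ ℕ) with ∑_j |b_{j,k}|·r^j < ∞ and ∑_j |c_{j,k}|·r^j < ∞ for all r > 0, such that for all (x,y) ∈ ℝ²: f(x+Iy) = F(x,y) + G(x,y)·J, where F(x,y) = ∑_{k=0}^{n} (x−Iy)^k·∑_j (x+Iy)^j·b_{j,k} and G(x,y) = ∑_{k=0}^{n} (x−Iy)^k·∑_j (x+Iy)^j·c_{j,k}; in particular F and G take values in ℂ_I. -/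

import Mathlib

/-!
Each coefficient splits as `u = b + c J` with `b = (u - I u I) / 2` and `c = -(u + I u I) J / 2`.
Since `I ^ 2 = -1` and `I J = -J I`, both `b` and `c` commute with `I`, and the centralizer of an
imaginary unit in `ℍ` is `ℝ + ℝ I`. As `‖b‖, ‖c‖ ≤ ‖u‖`, the split series are again entire,
and `f = F + G J` follows termwise because `J` multiplies from the right.
-/

open scoped Quaternion

noncomputable section

theorem norm_eq_one_of_mul_self_eq_neg_one {R : Type*} [NormedDivisionRing R] {I : R}
    (hI : I * I = -1) : ‖I‖ = 1 := by
  have h : ‖I‖ * ‖I‖ = 1 := by rw [← norm_mul, hI, norm_neg, norm_one]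
  nlinarith [norm_nonneg I]

section Split

variable {R : Type*} [Ring R] [Algebra ℝ R] {I J : R}

def splitFst (I u : R) : R := (2⁻¹ : ℝ) • (u - I * u * I)

def splitSnd (I J u : R) : R := -(2⁻¹ : ℝ) • ((u + I * u * I) * J)

theorem commute_splitFst (hI : I * I = -1) (u : R) : Commute (splitFst I u) I := by
  refine Commute.smul_left ?_ _
  change (u - I * u * I) * I = I * (u - I * u * I)
  rw [sub_mul, mul_sub, mul_assoc _ I I, hI, ← mul_assoc I (I * u), ← mul_assoc I I, hI]
  noncomm_ring

theorem commute_splitSnd (hI : I * I = -1) (hIJ : I * J = -(J * I)) (u : R) :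
    Commute (splitSnd I J u) I := by
  refine Commute.smul_left ?_ _
  have hanti : (u + I * u * I) * I = -(I * (u + I * u * I)) := by
    rw [add_mul, mul_add, mul_assoc _ I I, hI, ← mul_assoc I (I * u), ← mul_assoc I I, hI]
    noncomm_ring
  change (u + I * u * I) * J * I = I * ((u + I * u * I) * J)
  rw [mul_assoc, ← neg_neg (J * I), ← hIJ, mul_neg, ← mul_assoc, hanti, neg_mul, neg_neg,
    mul_assoc]

theorem splitFst_add_splitSnd_mul (hJ : J * J = -1) (u : R) :
    splitFst I u + splitSnd I J u * J = u := by
  rw [splitFst, splitSnd, smul_mul_assoc, mul_assoc _ J J, hJ, mul_neg_one]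
  module

end Split

section Norm

variable {R : Type*} [NormedDivisionRing R] [NormedAlgebra ℝ R] {I J : R}

theorem norm_splitFst_le (hI : ‖I‖ = 1) (u : R) : ‖splitFst I u‖ ≤ ‖u‖ := by
  have hconj : ‖I * u * I‖ = ‖u‖ := by simp [hI]
  calc ‖splitFst I u‖ = 2⁻¹ * ‖u - I * u * I‖ := by simp [splitFst, norm_smul]
    _ ≤ 2⁻¹ * (‖u‖ + ‖I * u * I‖) := by gcongr; exact norm_sub_le _ _
    _ = ‖u‖ := by rw [hconj]; ring

theorem norm_splitSnd_le (hI : ‖I‖ = 1) (hJ : ‖J‖ = 1) (u : R) :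
    ‖splitSnd I J u‖ ≤ ‖u‖ := by
  have hconj : ‖I * u * I‖ = ‖u‖ := by simp [hI]
  calc ‖splitSnd I J u‖ = 2⁻¹ * ‖u + I * u * I‖ := by simp [splitSnd, norm_smul, hJ]
    _ ≤ 2⁻¹ * (‖u‖ + ‖I * u * I‖) := by gcongr; exact norm_add_le _ _
    _ = ‖u‖ := by rw [hconj]; ring

end Norm

theorem summable_norm_mul_pow_of_norm_le {E : Type*} [SeminormedAddCommGroup E] {a d : ℕ → E}
    (hd : ∀ j, ‖d j‖ ≤ ‖a j‖) {r : ℝ} (hr : 0 ≤ r)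
    (ha : Summable fun j => ‖a j‖ * r ^ j) : Summable fun j => ‖d j‖ * r ^ j :=
  ha.of_nonneg_of_le (fun j => by positivity)
    (fun j => mul_le_mul_of_nonneg_right (hd j) (by positivity))

theorem summable_pow_mul_of_summable_norm_mul_pow {R : Type*} [NormedRing R] [NormOneClass R]
    [CompleteSpace R] {a : ℕ → R}
    (ha : ∀ r : ℝ, 0 < r → Summable fun j => ‖a j‖ * r ^ j) (q : R) :
    Summable fun j => q ^ j * a j := by
  refine Summable.of_norm ((ha (‖q‖ + 1) (by positivity)).of_nonneg_of_le
    (fun j => norm_nonneg _) (fun j => ?_))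
  calc ‖q ^ j * a j‖ ≤ ‖q‖ ^ j * ‖a j‖ := by
        grw [norm_mul_le, norm_pow_le]
    _ ≤ ‖a j‖ * (‖q‖ + 1) ^ j := by
        rw [mul_comm]; gcongr; linarith

theorem tsum_pow_mul_eq_split {R : Type*} [NormedDivisionRing R] [NormedAlgebra ℝ R]
    [CompleteSpace R] {I J : R} (hI : ‖I‖ = 1) (hJ : J * J = -1) {a : ℕ → R}
    (ha : ∀ r : ℝ, 0 < r → Summable fun j => ‖a j‖ * r ^ j) (q : R) :
    ∑' j, q ^ j * a j =
      ∑' j, q ^ j * splitFst I (a j) + (∑' j, q ^ j * splitSnd I J (a j)) * J := by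
  have hJ1 : ‖J‖ = 1 := norm_eq_one_of_mul_self_eq_neg_one hJ
  have hb := summable_pow_mul_of_summable_norm_mul_pow (fun r hr =>
    summable_norm_mul_pow_of_norm_le (fun j => norm_splitFst_le hI (a j)) hr.le (ha r hr)) q
  have hc := summable_pow_mul_of_summable_norm_mul_pow (fun r hr =>
    summable_norm_mul_pow_of_norm_le (fun j => norm_splitSnd_le hI hJ1 (a j)) hr.le (ha r hr)) q
  rw [← tsum_mul_right, ← hb.tsum_add (hc.mul_right J)]
  simp only [mul_assoc, ← mul_add, splitFst_add_splitSnd_mul hJ]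

namespace Quaternion

variable {I : ℍ[ℝ]}

theorem re_eq_zero_of_mul_self_eq_neg_one (hI : I * I = -1) : I.re = 0 := by
  rw [← sq_eq_neg_normSq, sq, hI, normSq_eq_norm_mul_self,
    norm_eq_one_of_mul_self_eq_neg_one hI, mul_one, coe_one]

theorem star_eq_neg_of_mul_self_eq_neg_one (hI : I * I = -1) : star I = -I :=
  star_eq_neg.2 (re_eq_zero_of_mul_self_eq_neg_one hI)

theorem star_coe_add_mul_coe (hI : I * I = -1) (x y : ℝ) :
    star ((x : ℍ[ℝ]) + I * y) = x - I * y := by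
  rw [star_add, star_mul, star_coe, star_coe, star_eq_neg_of_mul_self_eq_neg_one hI, mul_neg,
    coe_commutes, ← sub_eq_add_neg]

theorem exists_eq_coe_add_smul_of_commute (hI : I * I = -1) {q : ℍ[ℝ]} (hq : Commute q I) :
    ∃ s t : ℝ, q = s + t • I := by
  have him : Commute q.im I := by
    rw [eq_sub_of_add_eq' (re_add_im q)]
    exact hq.sub_left (coe_commutes _ I)
  -- `q.im * I` is self-adjoint, hence real
  obtain ⟨r, hr⟩ : ∃ r : ℝ, q.im * I = r := by
    refine ⟨_, star_eq_self.1 ?_⟩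
    rw [star_mul, star_eq_neg_of_mul_self_eq_neg_one hI, star_im, neg_mul_neg, him.eq]
  refine ⟨q.re, -r, ?_⟩
  calc q = q.re + -(q.im * I * I) := by rw [mul_assoc, hI, mul_neg_one, neg_neg, re_add_im]
    _ = q.re + (-r) • I := by rw [hr, coe_mul_eq_smul, neg_smul]

end Quaternion

/-- Splitting Lemma for S-polyregular functions. -/
theorem stmt5 (n : ℕ) (f : ℍ[ℝ] → ℍ[ℝ]) (a : ℕ → ℕ → ℍ[ℝ])
    (ha : ∀ k, k ≤ n → ∀ r : ℝ, 0 < r → Summable fun j : ℕ => ‖a j k‖ * r ^ j)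
    (hf : ∀ q : ℍ[ℝ],
      f q = ∑ k ∈ Finset.range (n + 1), (star q) ^ k * ∑' j : ℕ, q ^ j * a j k)
    (I J : ℍ[ℝ]) (hI : I * I = -1) (hJ : J * J = -1) (hIJ : I * J = -(J * I)) :
    ∃ b c : ℕ → ℕ → ℍ[ℝ],
      (∀ j k : ℕ, ∃ s t : ℝ, b j k = (s : ℍ[ℝ]) + t • I) ∧
      (∀ j k : ℕ, ∃ s t : ℝ, c j k = (s : ℍ[ℝ]) + t • I) ∧
      (∀ k, k ≤ n → ∀ r : ℝ, 0 < r → Summable fun j : ℕ => ‖b j k‖ * r ^ j) ∧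
      (∀ k, k ≤ n → ∀ r : ℝ, 0 < r → Summable fun j : ℕ => ‖c j k‖ * r ^ j) ∧
      ∀ x y : ℝ,
        f ((x : ℍ[ℝ]) + I * (y : ℍ[ℝ])) =
          (∑ k ∈ Finset.range (n + 1),
              ((x : ℍ[ℝ]) - I * (y : ℍ[ℝ])) ^ k *
                ∑' j : ℕ, ((x : ℍ[ℝ]) + I * (y : ℍ[ℝ])) ^ j * b j k) +
            (∑ k ∈ Finset.range (n + 1),
                ((x : ℍ[ℝ]) - I * (y : ℍ[ℝ])) ^ k *
                  ∑' j : ℕ, ((x : ℍ[ℝ]) + I * (y : ℍ[ℝ])) ^ j * c j k) * J := by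
  have hI1 : ‖I‖ = 1 := norm_eq_one_of_mul_self_eq_neg_one hI
  have hJ1 : ‖J‖ = 1 := norm_eq_one_of_mul_self_eq_neg_one hJ
  refine ⟨fun j k => splitFst I (a j k), fun j k => splitSnd I J (a j k),
    fun j k => Quaternion.exists_eq_coe_add_smul_of_commute hI (commute_splitFst hI _),
    fun j k => Quaternion.exists_eq_coe_add_smul_of_commute hI (commute_splitSnd hI hIJ _),
    fun k hk r hr => summable_norm_mul_pow_of_norm_le
      (fun j => norm_splitFst_le hI1 (a j k)) hr.le (ha k hk r hr),
    fun k hk r hr => summable_norm_mul_pow_of_norm_le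
      (fun j => norm_splitSnd_le hI1 hJ1 (a j k)) hr.le (ha k hk r hr),
    fun x y => ?_⟩
  rw [hf, Quaternion.star_coe_add_mul_coe hI, Finset.sum_mul, ← Finset.sum_add_distrib]
  refine Finset.sum_congr rfl fun k hk => ?_
  rw [tsum_pow_mul_eq_split hI1 hJ (ha k (Finset.mem_range_succ_iff.mp hk)), mul_add, mul_assoc]
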